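/- arXiv:1611.01944 — 2 statements merged into one kernel-verified Lean document; each statement's English description precedes it below -/
import Mathlib

section
/- Suppose γ > π(w₀), w is a solution with parameters (w₀,γ), and there exists some x > 0 with w′(x) < 0. Then there exists a unique x★ > 0 such that w is strictly increasing on [0, x★] and strictly decreasing on [x★, ∞); moreover w(x) → −∞ as x → ∞. -/
open Set MeasureTheory Filter Topology

/-- `piU U c w = min_{μ ∈ U} (μ·w + c(μ))`, realized as an infimum. -/
noncomputable def piU (U : Set ℝ) (c : ℝ → ℝ) (w : ℝ) : ℝ :=
  sInf ((fun μ => μ * w + c μ) '' U)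

/-- `w` is a continuously differentiable solution on `[0,∞)` of
`(σ²/2)·w′(x) + π(w(x)) + h(x) = γ` with `w(0) = w₀`, with derivative `w'`. -/
def IsSolution (σ : ℝ) (U : Set ℝ) (c h : ℝ → ℝ) (w₀ γ : ℝ) (w w' : ℝ → ℝ) : Prop :=
  w 0 = w₀ ∧ ContinuousOn w' (Set.Ici 0) ∧
  (∀ x ∈ Set.Ici (0:ℝ), HasDerivWithinAt w (w' x) (Set.Ici 0) x) ∧
  (∀ x ∈ Set.Ici (0:ℝ), σ ^ 2 / 2 * w' x + piU U c (w x) + h x = γ)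

open Real

/-! With `k = σ²/2` and `P = π`, which is Lipschitz with some constant `L`, the equation reads
`k w' = γ - P(w) - h`. Once `w'` has been `≤ 0`, it can never come back to `0`: at the first
return, a weighted difference `e^{±Lx/k} (w - const)` would be strictly monotone with impossible
boundary values, because `h` increases strictly. As `w'(0) > 0`, any zero `x★` of `w'` is then the
unique turning point. If `w` stayed bounded below after `x★`, then `P(w)` would stay bounded while
`h → ∞`, forcing `w' ≤ -1`. -/

lemma piU_le {U : Set ℝ} (hU : IsCompact U) {c : ℝ → ℝ} (hc : Continuous c) {μ : ℝ} (hμ : μ ∈ U)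
    (w : ℝ) : piU U c w ≤ μ * w + c μ :=
  csInf_le ((hU.image (by fun_prop)).bddBelow) (mem_image_of_mem _ hμ)

lemma exists_piU_eq {U : Set ℝ} (hU : IsCompact U) (hUne : U.Nonempty) {c : ℝ → ℝ}
    (hc : Continuous c) (w : ℝ) : ∃ μ ∈ U, piU U c w = μ * w + c μ := by
  obtain ⟨μ, hμ, hmin⟩ := hU.exists_isMinOn hUne (f := fun μ => μ * w + c μ) (by fun_prop)
  exact ⟨μ, hμ, le_antisymm (piU_le hU hc hμ w)
    (le_csInf (hUne.image _) (forall_mem_image.2 fun ν hν => hmin hν))⟩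

lemma lipschitzWith_piU {U : Set ℝ} (hU : IsCompact U) {c : ℝ → ℝ} (hc : Continuous c) :
    ∃ L, LipschitzWith L (piU U c) := by
  rcases U.eq_empty_or_nonempty with rfl | hUne
  · exact ⟨0, by simp [piU]⟩
  obtain ⟨L, hL⟩ := (hU.image continuous_abs).bddAbove
  refine ⟨L.toNNReal, LipschitzWith.of_le_add_mul' L fun a b => ?_⟩
  obtain ⟨μ, hμ, hb⟩ := exists_piU_eq hU hUne hc b
  calc piU U c a ≤ μ * a + c μ := piU_le hU hc hμ a
    _ = piU U c b + μ * (a - b) := by rw [hb]; ring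
    _ ≤ piU U c b + |μ| * |a - b| := by rw [← abs_mul]; gcongr; exact le_abs_self _
    _ ≤ piU U c b + L * dist a b := by
      rw [Real.dist_eq]
      gcongr
      exact hL (mem_image_of_mem _ hμ)

lemma strictMonoOn_exp_mul_mul {u u' : ℝ → ℝ} {K a b : ℝ} (hu : ContinuousOn u (Icc a b))
    (hu' : ∀ x ∈ Ioo a b, HasDerivAt u (u' x) x) (hpos : ∀ x ∈ Ioo a b, 0 < u' x + K * u x) :
    StrictMonoOn (fun x => exp (K * x) * u x) (Icc a b) := by
  refine strictMonoOn_of_hasDerivWithinAt_pos (convex_Icc a b) (by fun_prop)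
    (f' := fun x => exp (K * x) * (u' x + K * u x)) (fun x hx => ?_) fun x hx => ?_
  · rw [interior_Icc] at hx ⊢
    have hexp : HasDerivAt (fun x => exp (K * x)) (exp (K * x) * K) x := by
      simpa using ((hasDerivAt_id x).const_mul K).exp
    exact ((hexp.fun_mul (hu' x hx)).congr_deriv (by ring)).hasDerivWithinAt
  · rw [interior_Icc] at hx
    exact mul_pos (exp_pos _) (hpos x hx)

lemma tendsto_atBot_of_hasDerivAt_le_neg {f f' : ℝ → ℝ} {a ε : ℝ} (hε : 0 < ε)
    (hf : ∀ x ∈ Ici a, HasDerivAt f (f' x) x) (hf' : ∀ x ∈ Ici a, f' x ≤ -ε) :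
    Tendsto f atTop atBot := by
  have hle : ∀ x ∈ Ici a, f x - f a ≤ -ε * (x - a) := fun x hx =>
    (convex_Ici a).image_sub_le_mul_sub_of_deriv_le
      (fun y hy => (hf y hy).continuousAt.continuousWithinAt)
      (fun y hy => (hf y (interior_subset hy)).differentiableAt.differentiableWithinAt)
      (fun y hy => (hf y (interior_subset hy)).deriv ▸ hf' y (interior_subset hy))
      a self_mem_Ici x hx hx
  have hlin : Tendsto (fun x => f a + -ε * (x - a)) atTop atBot :=
    tendsto_atBot_add_const_left _ _
      ((tendsto_atTop_add_const_right _ (-a) tendsto_id).const_mul_atTop_of_neg (neg_lt_zero.2 hε))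
  refine tendsto_atBot_mono' _ ?_ hlin
  filter_upwards [eventually_ge_atTop a] with x hx
  linarith [hle x hx]

section ODE

variable {k γ : ℝ} {L : NNReal} {P h w w' : ℝ → ℝ}

lemma hasDerivWithinAt_interior_Icc (hw : ∀ x ∈ Ioi (0:ℝ), HasDerivAt w (w' x) x) {p b : ℝ}
    (hp : 0 ≤ p) : ∀ y ∈ interior (Icc p b), HasDerivWithinAt w (w' y) (interior (Icc p b)) y :=
  fun y hy => by
    rw [interior_Icc] at hy ⊢
    exact (hw y (hp.trans_lt hy.1)).hasDerivWithinAt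

lemma mul_deriv_sub_le (hP : LipschitzWith L P)
    (hode : ∀ x ∈ Ici (0:ℝ), k * w' x + P (w x) + h x = γ) {x y : ℝ} (hx : 0 ≤ x) (hy : 0 ≤ y) :
    k * w' y - k * w' x ≤ L * |w y - w x| - (h y - h x) := by
  have hPxy := (le_abs_self _).trans (hP.dist_le_mul (w x) (w y))
  rw [Real.dist_eq, abs_sub_comm] at hPxy
  linarith [hode x hx, hode y hy]

lemma deriv_ne_zero_of_nonpos_on_Icc (hk : 0 < k) (hP : LipschitzWith L P)
    (hh : StrictMonoOn h (Ici 0)) (hwc : ContinuousOn w (Ici 0))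
    (hw : ∀ x ∈ Ioi (0:ℝ), HasDerivAt w (w' x) x)
    (hode : ∀ x ∈ Ici (0:ℝ), k * w' x + P (w x) + h x = γ) {p b : ℝ} (hp : 0 ≤ p) (hpb : p < b)
    (hnonpos : ∀ y ∈ Icc p b, w' y ≤ 0) : w' b ≠ 0 := by
  intro hb
  have hsub : Icc p b ⊆ Ici 0 := fun y hy => hp.trans hy.1
  have hanti : AntitoneOn w (Icc p b) := by
    exact antitoneOn_of_hasDerivWithinAt_nonpos (convex_Icc p b) (hwc.mono hsub)
      (hasDerivWithinAt_interior_Icc hw hp) fun y hy => hnonpos y (interior_subset hy)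
  -- `u = w - w b ≥ 0` has `k u' + L u ≥ h b - h > 0`, so `e^{Lx/k} u` increases up to `u b = 0`
  have hgrowth : StrictMonoOn (fun y => exp (L / k * y) * (w y - w b)) (Icc p b) := by
    refine strictMonoOn_exp_mul_mul ((hwc.mono hsub).sub continuousOn_const)
      (fun y hy => (hw y (hp.trans_lt hy.1)).sub_const _) fun y hy => ?_
    have hy₀ : 0 ≤ y := hp.trans hy.1.le
    have hslope := mul_deriv_sub_le hP hode hy₀ (hp.trans hpb.le)
    rw [hb, abs_sub_comm, abs_of_nonneg (sub_nonneg.2 (hanti ⟨hy.1.le, hy.2.le⟩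
      ⟨hpb.le, le_rfl⟩ hy.2.le))] at hslope
    have hhy : h y < h b := hh hy₀ (hp.trans hpb.le) hy.2
    have hexpand : k * (w' y + L / k * (w y - w b)) = k * w' y + L * (w y - w b) := by
      field_simp
    refine pos_of_mul_pos_right (a := k) ?_ hk.le
    linarith
  have hpb' := hgrowth ⟨le_rfl, hpb.le⟩ ⟨hpb.le, le_rfl⟩ hpb
  have hwpb : 0 ≤ w p - w b := sub_nonneg.2 (hanti ⟨le_rfl, hpb.le⟩ ⟨hpb.le, le_rfl⟩ hpb.le)
  simp only [sub_self, mul_zero] at hpb'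
  exact (mul_nonneg (exp_pos _).le hwpb).not_gt hpb'

lemma exists_deriv_neg_of_deriv_eq_zero (hk : 0 < k) (hP : LipschitzWith L P)
    (hh : StrictMonoOn h (Ici 0)) (hwc : ContinuousOn w (Ici 0))
    (hw : ∀ x ∈ Ioi (0:ℝ), HasDerivAt w (w' x) x)
    (hode : ∀ x ∈ Ici (0:ℝ), k * w' x + P (w x) + h x = γ) {p b : ℝ} (hp : 0 ≤ p) (hpb : p < b)
    (hp0 : w' p = 0) : ∃ y ∈ Icc p b, w' y < 0 := by
  by_contra! hnonneg
  have hsub : Icc p b ⊆ Ici 0 := fun y hy => hp.trans hy.1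
  have hmono : MonotoneOn w (Icc p b) := by
    exact monotoneOn_of_hasDerivWithinAt_nonneg (convex_Icc p b) (hwc.mono hsub)
      (hasDerivWithinAt_interior_Icc hw hp) fun y hy => hnonneg y (interior_subset hy)
  -- `u = w p - w ≤ 0` has `k u' - L u ≥ h - h p > 0`, so `e^{-Lx/k} u` increases from `u p = 0`
  have hgrowth : StrictMonoOn (fun y => exp (-(L / k) * y) * (w p - w y)) (Icc p b) := by
    refine strictMonoOn_exp_mul_mul (continuousOn_const.sub (hwc.mono hsub))
      (fun y hy => (hw y (hp.trans_lt hy.1)).const_sub _) fun y hy => ?_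
    have hy₀ : 0 ≤ y := hp.trans hy.1.le
    have hslope := mul_deriv_sub_le hP hode hp hy₀
    rw [hp0, abs_of_nonneg (sub_nonneg.2 (hmono ⟨le_rfl, hpb.le⟩ ⟨hy.1.le, hy.2.le⟩
      hy.1.le))] at hslope
    have hhy : h p < h y := hh hp hy₀ hy.1
    have hexpand : k * (-w' y + -(L / k) * (w p - w y)) = -(k * w' y) + L * (w y - w p) := by
      field_simp
      ring
    refine pos_of_mul_pos_right (a := k) ?_ hk.le
    linarith
  have hpb' := hgrowth ⟨le_rfl, hpb.le⟩ ⟨hpb.le, le_rfl⟩ hpb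
  have hwpb : w p - w b ≤ 0 := sub_nonpos.2 (hmono ⟨le_rfl, hpb.le⟩ ⟨hpb.le, le_rfl⟩ hpb.le)
  simp only [sub_self, mul_zero] at hpb'
  exact (mul_nonpos_of_nonneg_of_nonpos (exp_pos _).le hwpb).not_gt hpb'

lemma deriv_neg_of_deriv_neg (hk : 0 < k) (hP : LipschitzWith L P)
    (hh : StrictMonoOn h (Ici 0)) (hwc : ContinuousOn w (Ici 0))
    (hw : ∀ x ∈ Ioi (0:ℝ), HasDerivAt w (w' x) x) (hw'c : ContinuousOn w' (Ici 0))
    (hode : ∀ x ∈ Ici (0:ℝ), k * w' x + P (w x) + h x = γ) {z y : ℝ} (hz : 0 ≤ z)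
    (hz' : w' z < 0) (hzy : z < y) : w' y < 0 := by
  by_contra! hy
  have hsub : Icc z y ⊆ Ici 0 := fun t ht => hz.trans ht.1
  have hclosed : IsClosed (Icc z y ∩ w' ⁻¹' Ici 0) :=
    (hw'c.mono hsub).preimage_isClosed_of_isClosed isClosed_Icc isClosed_Ici
  obtain ⟨b, ⟨hbzy, hb⟩, hbleast⟩ := (isCompact_Icc.of_isClosed_subset hclosed
    inter_subset_left).exists_isLeast ⟨y, ⟨hzy.le, le_rfl⟩, hy⟩
  have hzb : z < b := hbzy.1.lt_of_ne (by rintro rfl; exact (mem_Ici.1 hb).not_gt hz')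
  have hb0 : w' b = 0 := by
    obtain ⟨t, ht, ht0⟩ := intermediate_value_Icc hzb.le (hw'c.mono fun t ht => hz.trans ht.1)
      ⟨hz'.le, mem_Ici.1 hb⟩
    have hbt : b ≤ t := hbleast ⟨⟨ht.1, ht.2.trans hbzy.2⟩, ht0.ge⟩
    rwa [← le_antisymm ht.2 hbt]
  refine deriv_ne_zero_of_nonpos_on_Icc hk hP hh hwc hw hode hz hzb (fun t ht => ?_) hb0
  rcases ht.2.lt_or_eq with htb | rfl
  · by_contra! ht'
    exact (hbleast ⟨⟨ht.1, htb.le.trans hbzy.2⟩, ht'.le⟩).not_gt htb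
  · exact hb0.le

lemma deriv_neg_of_deriv_nonpos (hk : 0 < k) (hP : LipschitzWith L P)
    (hh : StrictMonoOn h (Ici 0)) (hwc : ContinuousOn w (Ici 0))
    (hw : ∀ x ∈ Ioi (0:ℝ), HasDerivAt w (w' x) x) (hw'c : ContinuousOn w' (Ici 0))
    (hode : ∀ x ∈ Ici (0:ℝ), k * w' x + P (w x) + h x = γ) {p y : ℝ} (hp : 0 ≤ p)
    (hp' : w' p ≤ 0) (hpy : p < y) : w' y < 0 := by
  rcases hp'.lt_or_eq with hp' | hp0
  · exact deriv_neg_of_deriv_neg hk hP hh hwc hw hw'c hode hp hp' hpy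
  obtain ⟨z, hz, hz'⟩ := exists_deriv_neg_of_deriv_eq_zero hk hP hh hwc hw hode hp hpy hp0
  rcases hz.2.lt_or_eq with hzy | rfl
  · exact deriv_neg_of_deriv_neg hk hP hh hwc hw hw'c hode (hp.trans hz.1) hz' hzy
  · exact hz'

lemma exists_strictMonoOn_Icc_strictAntiOn_Ici (hk : 0 < k) (hP : LipschitzWith L P)
    (hh : StrictMonoOn h (Ici 0)) (hwc : ContinuousOn w (Ici 0))
    (hw : ∀ x ∈ Ioi (0:ℝ), HasDerivAt w (w' x) x) (hw'c : ContinuousOn w' (Ici 0))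
    (hode : ∀ x ∈ Ici (0:ℝ), k * w' x + P (w x) + h x = γ) (hw'0 : 0 < w' 0) {x₁ : ℝ}
    (hx₁ : 0 < x₁) (hx₁' : w' x₁ < 0) :
    ∃ xs, 0 < xs ∧ StrictMonoOn w (Icc 0 xs) ∧ StrictAntiOn w (Ici xs) := by
  obtain ⟨xs, hxs, hxs0⟩ := intermediate_value_Ioo' hx₁.le (hw'c.mono Icc_subset_Ici_self)
    ⟨hx₁', hw'0⟩
  have hpos : ∀ t ∈ Ico 0 xs, 0 < w' t := fun t ht => by
    by_contra! ht'
    exact (deriv_neg_of_deriv_nonpos hk hP hh hwc hw hw'c hode ht.1 ht' ht.2).ne hxs0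
  have hneg : ∀ t ∈ Ioi xs, w' t < 0 := fun t ht =>
    deriv_neg_of_deriv_nonpos hk hP hh hwc hw hw'c hode hxs.1.le hxs0.le ht
  refine ⟨xs, hxs.1, ?_, ?_⟩
  · refine strictMonoOn_of_hasDerivWithinAt_pos (convex_Icc 0 xs) (hwc.mono Icc_subset_Ici_self)
      (hasDerivWithinAt_interior_Icc hw le_rfl) fun t ht => hpos t ?_
    rw [interior_Icc] at ht
    exact Ioo_subset_Ico_self ht
  · refine strictAntiOn_of_hasDerivWithinAt_neg (f' := w') (convex_Ici xs)
      (hwc.mono (Ici_subset_Ici.2 hxs.1.le)) (fun t ht => ?_) fun t ht => ?_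
    all_goals rw [interior_Ici] at ht
    · exact (hw t (hxs.1.trans ht)).hasDerivWithinAt
    · exact hneg t ht

lemma tendsto_atBot_of_antitoneOn (hk : 0 < k) (hP : Continuous P)
    (hh : Tendsto h atTop atTop) (hw : ∀ x ∈ Ioi (0:ℝ), HasDerivAt w (w' x) x)
    (hode : ∀ x ∈ Ici (0:ℝ), k * w' x + P (w x) + h x = γ) {a : ℝ} (ha : 0 < a)
    (hanti : AntitoneOn w (Ici a)) : Tendsto w atTop atBot := by
  refine tendsto_atBot.2 fun B => ?_
  by_cases hB : ∃ x₀ ∈ Ici a, w x₀ ≤ B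
  · obtain ⟨x₀, hx₀, hwx₀⟩ := hB
    exact eventually_atTop.2 ⟨x₀, fun x hx => (hanti hx₀ (mem_Ici.2 (hx₀.trans hx)) hx).trans hwx₀⟩
  push Not at hB
  exfalso
  obtain ⟨C, hC⟩ := (isCompact_Icc (a := B) (b := w a)).bddBelow_image hP.continuousOn
  obtain ⟨X, hX⟩ := eventually_atTop.1 (hh.eventually_ge_atTop (γ - C + k))
  have hslope : ∀ x ∈ Ici (max X a), w' x ≤ -1 := fun x hx => by
    have hxa : a ≤ x := (le_max_right _ _).trans hx
    have hPC : C ≤ P (w x) :=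
      hC (mem_image_of_mem _ ⟨(hB x hxa).le, hanti self_mem_Ici (mem_Ici.2 hxa) hxa⟩)
    have := hX x ((le_max_left _ _).trans hx)
    have := hode x (ha.le.trans hxa)
    nlinarith
  have hlim := tendsto_atBot_of_hasDerivAt_le_neg one_pos
    (fun x hx => hw x (ha.trans_le ((le_max_right _ _).trans hx))) hslope
  obtain ⟨x, hxB, hxa⟩ := ((hlim.eventually_lt_atBot B).and (eventually_ge_atTop a)).exists
  exact (hB x hxa).not_gt hxB

end ODE

lemma eq_of_strictMonoOn_Icc_of_strictAntiOn_Ici {α β : Type*} [LinearOrder α] [Preorder β]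
    {f : α → β} {s a b : α} (ha : s ≤ a) (hb : s ≤ b) (hma : StrictMonoOn f (Icc s a))
    (haa : StrictAntiOn f (Ici a)) (hmb : StrictMonoOn f (Icc s b))
    (hab : StrictAntiOn f (Ici b)) : a = b := by
  by_contra hne
  rcases lt_or_gt_of_ne hne with hlt | hlt
  · exact (haa self_mem_Ici hlt.le hlt).not_gt (hmb ⟨ha, hlt.le⟩ ⟨hb, le_rfl⟩ hlt)
  · exact (hab self_mem_Ici hlt.le hlt).not_gt (hma ⟨hb, hlt.le⟩ ⟨ha, le_rfl⟩ hlt)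

theorem stmt_11_general (σ : ℝ) (hσ : 0 < σ) (U : Set ℝ) (hUcpt : IsCompact U)
    (c : ℝ → ℝ) (hc : Continuous c) (h : ℝ → ℝ)
    (hhmono : StrictMonoOn h (Set.Ici 0))
    (hh0 : h 0 = 0) (hhtop : Filter.Tendsto h Filter.atTop Filter.atTop)
    (w₀ γ : ℝ) (w w' : ℝ → ℝ) (hw : IsSolution σ U c h w₀ γ w w')
    (hγ : piU U c w₀ < γ) (hneg : ∃ x : ℝ, 0 < x ∧ w' x < 0) :
    (∃! xs : ℝ, 0 < xs ∧ StrictMonoOn w (Set.Icc 0 xs) ∧ StrictAntiOn w (Set.Ici xs)) ∧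
    Filter.Tendsto w Filter.atTop Filter.atBot := by
  obtain ⟨hw0, hw'c, hwd, hode⟩ := hw
  obtain ⟨L, hL⟩ := lipschitzWith_piU hUcpt hc
  obtain ⟨x₁, hx₁, hx₁'⟩ := hneg
  have hk : 0 < σ ^ 2 / 2 := by positivity
  have hwc : ContinuousOn w (Ici 0) := fun x hx => (hwd x hx).continuousWithinAt
  have hw : ∀ x ∈ Ioi (0:ℝ), HasDerivAt w (w' x) x := fun x hx =>
    (hwd x (mem_Ici.2 (le_of_lt hx))).hasDerivAt (Ici_mem_nhds hx)
  have hw'0 : 0 < w' 0 := by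
    have := hode 0 self_mem_Ici
    rw [hw0, hh0] at this
    nlinarith
  obtain ⟨xs, hxs, hmono, hanti⟩ := exists_strictMonoOn_Icc_strictAntiOn_Ici hk hL hhmono hwc hw
    hw'c hode hw'0 hx₁ hx₁'
  refine ⟨⟨xs, ⟨hxs, hmono, hanti⟩, fun y ⟨hy, hmono', hanti'⟩ => ?_⟩,
    tendsto_atBot_of_antitoneOn hk hL.continuous hhtop hw hode hxs hanti.antitoneOn⟩
  exact eq_of_strictMonoOn_Icc_of_strictAntiOn_Ici hy.le hxs.le hmono' hanti' hmono hanti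

theorem stmt_11 (σ : ℝ) (hσ : 0 < σ) (U : Set ℝ) (hUne : U.Nonempty) (hUcpt : IsCompact U)
    (c : ℝ → ℝ) (hc : Continuous c) (h : ℝ → ℝ)
    (hhcont : ContinuousOn h (Set.Ici 0)) (hhmono : StrictMonoOn h (Set.Ici 0))
    (hh0 : h 0 = 0) (hhtop : Filter.Tendsto h Filter.atTop Filter.atTop)
    (w₀ γ : ℝ) (w w' : ℝ → ℝ) (hw : IsSolution σ U c h w₀ γ w w')
    (hγ : piU U c w₀ < γ) (hneg : ∃ x : ℝ, 0 < x ∧ w' x < 0) :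
    (∃! xs : ℝ, 0 < xs ∧ StrictMonoOn w (Set.Icc 0 xs) ∧ StrictAntiOn w (Set.Ici xs)) ∧
    Filter.Tendsto w Filter.atTop Filter.atBot :=
  stmt_11_general σ hσ U hUcpt c hc h hhmono hh0 hhtop w₀ γ w w' hw hγ hneg
end

section
/- Let ℓ > 0 and L > 0. For w₀ < ℓ write γ₁★(w₀) for a number γ such that the solution with parameters (w₀,γ) satisfies ∫₀^∞ max(w(x) − ℓ, 0) dx = L. Then γ₁★(w₀) is unique: if two values γ, γ̃ both have this property for the same w₀ < ℓ, then γ = γ̃. Moreover γ₁★ is strictly decreasing: if w₀† < w₀‡ < ℓ, then γ₁★(w₀‡) < γ₁★(w₀†). -/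
/-!
Since `U` is bounded, `π` is Lipschitz, so for solutions `w, v` with `γ ≤ γ'` the difference
`d = v - w` satisfies `d' ≥ -K d` wherever `d > 0`; a Gronwall barrier shows that `d > 0` persists.
With equal initial values and `γ < γ'` one has `d(0) = 0 < d'(0)`, so `d` becomes positive at once.
Thus a larger `γ`, or a larger initial value with `γ` not smaller, gives a solution that is strictly
larger on `(0, ∞)`. As `∫ (v - ℓ)⁺ = L > 0`, `v` exceeds `ℓ` on an open set, where
`(w - ℓ)⁺ < (v - ℓ)⁺`, so the two integrals cannot both equal `L`.
-/

open Set MeasureTheory Filter Topology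

lemma piU_sub_le {U : Set ℝ} {c : ℝ → ℝ} (hUne : U.Nonempty) (hUcpt : IsCompact U)
    (hc : Continuous c) {M : ℝ} (hM : ∀ μ ∈ U, |μ| ≤ M) (a b : ℝ) :
    piU U c a - piU U c b ≤ M * |a - b| := by
  have hbdd : BddBelow ((fun μ => μ * a + c μ) '' U) :=
    (hUcpt.image (by fun_prop)).bddBelow
  rw [sub_le_comm]
  refine le_csInf (hUne.image _) ?_
  rintro _ ⟨μ, hμ, rfl⟩
  have hle : μ * (a - b) ≤ M * |a - b| :=
    calc μ * (a - b) ≤ |μ| * |a - b| := by rw [← abs_mul]; exact le_abs_self _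
      _ ≤ M * |a - b| := by gcongr; exact hM μ hμ
  have := csInf_le hbdd (mem_image_of_mem _ hμ)
  simp only [piU] at this ⊢
  linarith

/- The barrier `d a * exp (-(K + 1) * (x - a))` is touched by `d` only where `d > 0`, and there
it decreases strictly faster than `d`. -/
lemma pos_of_hasDerivWithinAt_ge_neg_mul {d d' : ℝ → ℝ} {K a : ℝ}
    (hd : ∀ x ∈ Ici a, HasDerivWithinAt d (d' x) (Ici a) x)
    (hK : ∀ x ∈ Ici a, 0 < d x → -(K * d x) ≤ d' x) (ha : 0 < d a) {x : ℝ} (hx : a ≤ x) :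
    0 < d x := by
  set β : ℝ → ℝ := fun y => d a * Real.exp (-(K + 1) * (y - a))
  have hβ : ∀ y, HasDerivAt β (-(K + 1) * β y) y := fun y => by
    refine (((((hasDerivAt_id y).sub_const a).const_mul (-(K + 1))).exp).const_mul
      (d a)).congr_deriv ?_
    simp only [β, id]
    ring
  have hβd : β x ≤ d x := by
    refine image_le_of_deriv_right_lt_deriv_boundary' (f' := fun y => -(K + 1) * β y)
      (fun y _ => (hβ y).continuousAt.continuousWithinAt) (fun y _ => (hβ y).hasDerivWithinAt)
      (by simp [β]) (fun y hy => (hd y hy.1).continuousWithinAt.mono Icc_subset_Ici_self)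
      (fun y hy => (hd y hy.1).mono (Ici_subset_Ici.2 hy.1)) ?_ ⟨hx, le_rfl⟩
    intro y hy hβy
    have hdy : 0 < d y := hβy ▸ by positivity
    have := hK y hy.1 hdy
    simp only [← hβy] at this ⊢
    linarith
  exact (by positivity : 0 < β x).trans_le hβd

lemma exists_pos_of_hasDerivWithinAt_Ici {d : ℝ → ℝ} {d' a b : ℝ}
    (hd : HasDerivWithinAt d d' (Ici a) a) (hd' : 0 < d') (ha : d a = 0) (hab : a < b) :
    ∃ y ∈ Ioo a b, 0 < d y := by
  have hslope : Tendsto (slope d a) (𝓝[>] a) (𝓝 d') := by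
    simpa [← Ici_sdiff_left] using hasDerivWithinAt_iff_tendsto_slope.mp hd
  obtain ⟨y, hy, hya⟩ := ((hslope.eventually (lt_mem_nhds hd')).and
    (Ioo_mem_nhdsGT hab)).exists
  exact ⟨y, hya, pos_of_slope_pos hya.1 hy ha⟩

lemma setIntegral_max_sub_lt {α : Type*} [TopologicalSpace α] [MeasurableSpace α]
    [OpensMeasurableSpace α] {μ : Measure α} [μ.IsOpenPosMeasure] {s : Set α} (hs : IsOpen s)
    {w v : α → ℝ} {ℓ : ℝ} (hv : ContinuousOn v s) (hlt : ∀ x ∈ s, w x < v x)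
    (hI : ∫ x in s, max (v x - ℓ) 0 ∂μ ≠ 0) :
    ∫ x in s, max (w x - ℓ) 0 ∂μ < ∫ x in s, max (v x - ℓ) 0 ∂μ := by
  have hvi : IntegrableOn (fun x => max (v x - ℓ) 0) s μ := by
    by_contra hni; exact hI (integral_undef hni)
  by_cases hwi : IntegrableOn (fun x => max (w x - ℓ) 0) s μ
  swap
  · rw [integral_undef hwi]
    exact (setIntegral_nonneg hs.measurableSet fun x _ => le_max_right _ _).lt_of_ne' hI
  have hexceed : (s ∩ v ⁻¹' Ioi ℓ).Nonempty := by
    by_contra hempty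
    refine hI (setIntegral_eq_zero_of_forall_eq_zero fun x hx => max_eq_right ?_)
    have : x ∉ v ⁻¹' Ioi ℓ := fun hxv => hempty ⟨x, hx, hxv⟩
    simpa using this
  have hsupp : s ∩ v ⁻¹' Ioi ℓ ⊆
      Function.support (fun x => max (v x - ℓ) 0 - max (w x - ℓ) 0) ∩ s := by
    rintro x ⟨hxs, hxv⟩
    refine ⟨sub_ne_zero.2 (ne_of_gt ?_), hxs⟩
    have hxv : ℓ < v x := hxv
    rw [max_eq_left (sub_nonneg.2 hxv.le : 0 ≤ v x - ℓ)]
    exact max_lt (by linarith [hlt x hxs]) (sub_pos.2 hxv)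
  have hpos : 0 < ∫ x in s, (max (v x - ℓ) 0 - max (w x - ℓ) 0) ∂μ := by
    refine (setIntegral_pos_iff_support_of_nonneg_ae ?_ (hvi.sub hwi)).2 <|
      ((hv.isOpen_inter_preimage hs isOpen_Ioi).measure_pos μ hexceed).trans_le
        (measure_mono hsupp)
    filter_upwards [ae_restrict_mem hs.measurableSet] with x hx
    exact sub_nonneg.2 (max_le_max (by linarith [hlt x hx]) le_rfl)
  rwa [integral_sub hvi hwi, sub_pos] at hpos

namespace IsSolution

variable {σ : ℝ} {U : Set ℝ} {c h : ℝ → ℝ} {w₀ v₀ γ γ' : ℝ} {w w' v v' : ℝ → ℝ}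

lemma continuousOn (hw : IsSolution σ U c h w₀ γ w w') : ContinuousOn w (Ici 0) :=
  fun x hx => (hw.2.2.1 x hx).continuousWithinAt

lemma lt_of_lt_of_rhs_le (hσ : 0 < σ) (hUne : U.Nonempty) (hUcpt : IsCompact U)
    (hc : Continuous c) (hw : IsSolution σ U c h w₀ γ w w') (hv : IsSolution σ U c h v₀ γ' v v')
    (hγ : γ ≤ γ')
    {x₀ x : ℝ} (hx₀ : 0 ≤ x₀) (hlt : w x₀ < v x₀) (hx : x₀ ≤ x) : w x < v x := by
  obtain ⟨M, hM⟩ := hUcpt.isBounded.exists_norm_le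
  have hd : ∀ y ∈ Ici x₀, HasDerivWithinAt (fun y => v y - w y) (v' y - w' y) (Ici x₀) y :=
    fun y hy => ((hv.2.2.1 y (hx₀.trans hy)).sub (hw.2.2.1 y (hx₀.trans hy))).mono
      (Ici_subset_Ici.2 hx₀)
  have hK : ∀ y ∈ Ici x₀, 0 < v y - w y →
      -(2 * M / σ ^ 2 * (v y - w y)) ≤ v' y - w' y := by
    intro y hy hpos
    have hπ := piU_sub_le hUne hUcpt hc hM (v y) (w y)
    rw [abs_of_pos hpos] at hπ
    have ew := hw.2.2.2 y (hx₀.trans hy)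
    have ev := hv.2.2.2 y (hx₀.trans hy)
    have hσ2 : 0 < σ ^ 2 := by positivity
    rw [neg_le, ← sub_nonneg, ← mul_nonneg_iff_of_pos_left hσ2]
    field_simp
    linarith
  exact sub_pos.1 (pos_of_hasDerivWithinAt_ge_neg_mul hd hK (sub_pos.2 hlt) hx)

lemma lt_of_rhs_lt (hσ : 0 < σ) (hUne : U.Nonempty) (hUcpt : IsCompact U) (hc : Continuous c)
    (hw : IsSolution σ U c h w₀ γ w w') (hv : IsSolution σ U c h w₀ γ' v v') (hγ : γ < γ')
    {x : ℝ} (hx : 0 < x) : w x < v x := by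
  have hd := (hv.2.2.1 0 self_mem_Ici).sub (hw.2.2.1 0 self_mem_Ici)
  have hd' : 0 < v' 0 - w' 0 := by
    have ew := hw.2.2.2 0 self_mem_Ici
    have ev := hv.2.2.2 0 self_mem_Ici
    rw [hw.1, ← hv.1] at ew
    have : 0 < σ ^ 2 / 2 * (v' 0 - w' 0) := by linarith
    exact pos_of_mul_pos_right this (by positivity)
  obtain ⟨y, hy, hpos⟩ := exists_pos_of_hasDerivWithinAt_Ici hd hd' (by simp [hw.1, hv.1]) hx
  exact lt_of_lt_of_rhs_le hσ hUne hUcpt hc hw hv hγ.le hy.1.le (sub_pos.1 hpos) hy.2.le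

end IsSolution

theorem stmt_14_general (σ : ℝ) (hσ : 0 < σ) (U : Set ℝ) (hUne : U.Nonempty) (hUcpt : IsCompact U)
    (c : ℝ → ℝ) (hc : Continuous c) (h : ℝ → ℝ)
    (ℓ L : ℝ) (hL : 0 < L) :
    (∀ w₀ γ γ' : ℝ, ∀ w w' v v' : ℝ → ℝ, w₀ < ℓ →
      IsSolution σ U c h w₀ γ w w' → IsSolution σ U c h w₀ γ' v v' →
      (∫ x in Set.Ioi (0:ℝ), max (w x - ℓ) 0) = L →
      (∫ x in Set.Ioi (0:ℝ), max (v x - ℓ) 0) = L → γ = γ') ∧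
    (∀ w₀₁ w₀₂ γ₁ γ₂ : ℝ, ∀ w₁ w₁' w₂ w₂' : ℝ → ℝ, w₀₁ < w₀₂ → w₀₂ < ℓ →
      IsSolution σ U c h w₀₁ γ₁ w₁ w₁' → IsSolution σ U c h w₀₂ γ₂ w₂ w₂' →
      (∫ x in Set.Ioi (0:ℝ), max (w₁ x - ℓ) 0) = L →
      (∫ x in Set.Ioi (0:ℝ), max (w₂ x - ℓ) 0) = L → γ₂ < γ₁) := by
  have hne : ∀ {w v : ℝ → ℝ}, ContinuousOn v (Ici 0) → (∀ x ∈ Ioi (0:ℝ), w x < v x) →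
      (∫ x in Ioi (0:ℝ), max (v x - ℓ) 0) = L → (∫ x in Ioi (0:ℝ), max (w x - ℓ) 0) ≠ L :=
    fun hv hlt hIv => hIv ▸ (setIntegral_max_sub_lt isOpen_Ioi (hv.mono Ioi_subset_Ici_self)
      hlt (hIv ▸ hL.ne')).ne
  refine ⟨fun w₀ γ γ' w w' v v' _ hw hv hIw hIv => ?_,
    fun w₀₁ w₀₂ γ₁ γ₂ w₁ w₁' w₂ w₂' h₀ _ hw₁ hw₂ hI₁ hI₂ => ?_⟩
  · by_contra hγ
    rcases lt_or_gt_of_ne hγ with hγ | hγ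
    · exact hne hv.continuousOn
        (fun x hx => hw.lt_of_rhs_lt hσ hUne hUcpt hc hv hγ hx) hIv hIw
    · exact hne hw.continuousOn
        (fun x hx => hv.lt_of_rhs_lt hσ hUne hUcpt hc hw hγ hx) hIw hIv
  · by_contra hγ
    exact hne hw₂.continuousOn (fun x hx => hw₁.lt_of_lt_of_rhs_le hσ hUne hUcpt hc hw₂
      (not_lt.1 hγ) le_rfl (by rwa [hw₁.1, hw₂.1]) (le_of_lt hx)) hI₂ hI₁

theorem stmt_14 (σ : ℝ) (hσ : 0 < σ) (U : Set ℝ) (hUne : U.Nonempty) (hUcpt : IsCompact U)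
    (c : ℝ → ℝ) (hc : Continuous c) (h : ℝ → ℝ)
    (hhcont : ContinuousOn h (Set.Ici 0)) (hhmono : StrictMonoOn h (Set.Ici 0))
    (hh0 : h 0 = 0) (hhtop : Filter.Tendsto h Filter.atTop Filter.atTop)
    (ℓ L : ℝ) (hℓ : 0 < ℓ) (hL : 0 < L) :
    (∀ w₀ γ γ' : ℝ, ∀ w w' v v' : ℝ → ℝ, w₀ < ℓ →
      IsSolution σ U c h w₀ γ w w' → IsSolution σ U c h w₀ γ' v v' →
      (∫ x in Set.Ioi (0:ℝ), max (w x - ℓ) 0) = L →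
      (∫ x in Set.Ioi (0:ℝ), max (v x - ℓ) 0) = L → γ = γ') ∧
    (∀ w₀₁ w₀₂ γ₁ γ₂ : ℝ, ∀ w₁ w₁' w₂ w₂' : ℝ → ℝ, w₀₁ < w₀₂ → w₀₂ < ℓ →
      IsSolution σ U c h w₀₁ γ₁ w₁ w₁' → IsSolution σ U c h w₀₂ γ₂ w₂ w₂' →
      (∫ x in Set.Ioi (0:ℝ), max (w₁ x - ℓ) 0) = L →
      (∫ x in Set.Ioi (0:ℝ), max (w₂ x - ℓ) 0) = L → γ₂ < γ₁) :=
  stmt_14_general σ hσ U hUne hUcpt c hc h ℓ L hL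
end
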